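/- arXiv:2506.16954 — 5 statements merged into one kernel-verified Lean document; each statement's English description precedes it below -/
import Mathlib

section
/- Fix an integer r ≥ 2 and a real number c < 0. Let γ : I → H²₁(c) ⊂ ℝ³ be a smooth space-like curve parametrized by arc length, i.e. ⟪T,T⟫₂ = 1 where T = γ′, and assume γ has constant nonzero curvature: there exist a constant κ > 0 and a smooth vector field N along γ, tangent to the quadric, with ⟪N,N⟫₂ = −1, ⟪T,N⟫₂ = 0, ∇T = −κN and ∇N = −κT. Then γ is proper r-harmonic (τ_r(γ) ≡ 0) if and only if κ² + (r−1)c = 0. -/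
open scoped BigOperators

noncomputable section

/-- The pseudo-Euclidean bilinear form of index `t` on `ℝⁿ` (modelled as `Fin n → ℝ`):
`⟪x,y⟫_t = −∑_{i<t} x_i y_i + ∑_{i≥t} x_i y_i`. -/
def pform (t : ℕ) {n : ℕ} (x y : Fin n → ℝ) : ℝ :=
  ∑ i : Fin n, (if i.val < t then -(x i * y i) else x i * y i)

/-- The covariant derivative along `γ` induced on the quadric `⟪x,x⟫_t = 1/c`:
`∇X = X′ − c⟪X′,γ⟫_t γ`. -/
def cov (t : ℕ) {n : ℕ} (c : ℝ) (γ X : ℝ → Fin n → ℝ) : ℝ → Fin n → ℝ :=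
  fun s => deriv X s - (c * pform t (deriv X s) (γ s)) • γ s

/-- The curvature operator of the space form: `R(X,Y)Z = c(⟪Y,Z⟫_t X − ⟪X,Z⟫_t Y)`. -/
def curvOp (t : ℕ) {n : ℕ} (c : ℝ) (X Y Z : Fin n → ℝ) : Fin n → ℝ :=
  c • (pform t Y Z • X - pform t X Z • Y)

/-- The `r`-tension field of a curve `γ` in the space form:
`τ_r(γ) = ∇^{2r−1}T + ∑_{ℓ=0}^{r−2} (−1)^ℓ R(∇^{2r−3−ℓ}T, ∇^ℓT)T` with `T = γ′`. -/
def tensionField (t : ℕ) {n : ℕ} (c : ℝ) (r : ℕ) (γ : ℝ → Fin n → ℝ) (s : ℝ) : Fin n → ℝ :=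
  (cov t c γ)^[2*r-1] (deriv γ) s
    + ∑ ℓ ∈ Finset.range (r-1), ((-1 : ℝ)^ℓ) •
        curvOp t c ((cov t c γ)^[2*r-3-ℓ] (deriv γ) s) ((cov t c γ)^[ℓ] (deriv γ) s) (deriv γ s)

lemma pform_smul_left (t : ℕ) {n : ℕ} (a : ℝ) (x y : Fin n → ℝ) :
    pform t (a • x) y = a * pform t x y := by
  unfold pform
  rw [Finset.mul_sum]
  refine Finset.sum_congr rfl fun i _ => ?_
  by_cases h : (i : ℕ) < t <;> simp [h] <;> ring

lemma pform_comm (t : ℕ) {n : ℕ} (x y : Fin n → ℝ) :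
    pform t x y = pform t y x := by
  unfold pform
  refine Finset.sum_congr rfl fun i _ => ?_
  by_cases h : (i : ℕ) < t <;> simp [h, mul_comm]

lemma cov_congr {n : ℕ} (t : ℕ) (c : ℝ) (γ f g : ℝ → Fin n → ℝ) {I : Set ℝ} (hI : IsOpen I)
    (hfg : ∀ u ∈ I, f u = g u) {s : ℝ} (hs : s ∈ I) :
    cov t c γ f s = cov t c γ g s := by
  have h : f =ᶠ[nhds s] g := Filter.eventuallyEq_of_mem (hI.mem_nhds hs) hfg
  simp only [cov, h.deriv_eq]

lemma cov_smul {n : ℕ} (t : ℕ) (c a : ℝ) (γ X : ℝ → Fin n → ℝ) {s : ℝ}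
    (hX : DifferentiableAt ℝ X s) :
    cov t c γ (fun u => a • X u) s = a • cov t c γ X s := by
  simp only [cov, deriv_fun_const_smul a hX, pform_smul_left, smul_sub, smul_smul]
  congr 2
  ring

/-- A space-like unit-speed curve of constant curvature `κ > 0` in the
anti-de Sitter plane `H²₁(c) ⊂ ℝ³₂` (`c < 0`) is proper `r`-harmonic iff `κ² + (r−1)c = 0`. -/
theorem stmt_0 (r : ℕ) (hr : 2 ≤ r) (c : ℝ) (hc : c < 0)
    (I : Set ℝ) (hIopen : IsOpen I) (hIne : I.Nonempty)
    (γ N : ℝ → Fin 3 → ℝ)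
    (hγ : ContDiffOn ℝ (⊤ : ℕ∞) γ I) (hN : ContDiffOn ℝ (⊤ : ℕ∞) N I)
    (hquad : ∀ s ∈ I, pform 2 (γ s) (γ s) = 1 / c)
    (hunit : ∀ s ∈ I, pform 2 (deriv γ s) (deriv γ s) = 1)
    (κ : ℝ) (hκ : 0 < κ)
    (hNtan : ∀ s ∈ I, pform 2 (N s) (γ s) = 0)
    (hNN : ∀ s ∈ I, pform 2 (N s) (N s) = -1)
    (hTN : ∀ s ∈ I, pform 2 (deriv γ s) (N s) = 0)
    (hFr1 : ∀ s ∈ I, cov 2 c γ (deriv γ) s = (-κ) • N s)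
    (hFr2 : ∀ s ∈ I, cov 2 c γ N s = (-κ) • deriv γ s) :
    (∀ s ∈ I, tensionField 2 c r γ s = 0) ↔ κ ^ 2 + ((r : ℝ) - 1) * c = 0 := by
  obtain ⟨m, rfl⟩ : ∃ m, r = m + 2 := ⟨r - 2, by omega⟩
  -- differentiability of T and N on I
  have hTd : ∀ s ∈ I, DifferentiableAt ℝ (deriv γ) s := by
    intro s hs
    have : ContDiffOn ℝ (⊤ : ℕ∞) (deriv γ) I := hγ.deriv_of_isOpen hIopen (by simp)
    exact (this.differentiableOn (by simp)).differentiableAt (hIopen.mem_nhds hs)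
  have hNd : ∀ s ∈ I, DifferentiableAt ℝ N s :=
    fun s hs => (hN.differentiableOn (by simp)).differentiableAt (hIopen.mem_nhds hs)
  -- iterate formula
  have A : ∀ k, ∀ s ∈ I, (cov 2 c γ)^[k] (deriv γ) s =
      if Even k then (κ ^ k) • deriv γ s else (-(κ ^ k)) • N s := by
    intro k
    induction k with
    | zero => intro s hs; simp
    | succ k ih =>
      intro s hs
      rw [Function.iterate_succ_apply']
      by_cases hk : Even k
      · have h1 : cov 2 c γ ((cov 2 c γ)^[k] (deriv γ)) s
            = cov 2 c γ (fun u => (κ ^ k) • deriv γ u) s :=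
          cov_congr 2 c γ _ _ hIopen (fun u hu => by rw [ih u hu, if_pos hk]) hs
        rw [h1, cov_smul 2 c _ γ _ (hTd s hs), hFr1 s hs,
          if_neg (by simpa [Nat.even_add_one] using hk), smul_smul]
        congr 1
        ring
      · have h1 : cov 2 c γ ((cov 2 c γ)^[k] (deriv γ)) s
            = cov 2 c γ (fun u => (-(κ ^ k)) • N u) s :=
          cov_congr 2 c γ _ _ hIopen (fun u hu => by rw [ih u hu, if_neg hk]) hs
        rw [h1, cov_smul 2 c _ γ _ (hNd s hs), hFr2 s hs,
          if_pos (by simpa [Nat.even_add_one] using hk), smul_smul]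
        congr 1
        ring
  -- main pointwise formula
  have key : ∀ s ∈ I, tensionField 2 c (m + 2) γ s
      = (-(κ ^ (2*m+1)) * (κ ^ 2 + ((m : ℝ) + 1) * c)) • N s := by
    intro s hs
    have h1 : 2 * (m + 2) - 1 = 2 * m + 3 := by omega
    have hodd : ¬ Even (2 * m + 3) := by simp [Nat.even_iff]
    have hsum : ∀ ℓ ∈ Finset.range (m + 1),
        ((-1 : ℝ) ^ ℓ) • curvOp 2 c ((cov 2 c γ)^[2*(m+2)-3-ℓ] (deriv γ) s)
          ((cov 2 c γ)^[ℓ] (deriv γ) s) (deriv γ s)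
        = (-(c * κ ^ (2*m+1))) • N s := by
      intro ℓ hℓ
      rw [Finset.mem_range] at hℓ
      have ha : 2*(m+2)-3-ℓ = 2*m+1-ℓ := by omega
      have hsum' : (2*m+1-ℓ) + ℓ = 2*m+1 := by omega
      have hpar : Even (2*m+1-ℓ) ↔ ¬ Even ℓ := by
        rw [Nat.even_sub (by omega)]
        simp only [Nat.even_iff]
        omega
      rw [ha, A _ s hs, A _ s hs]
      by_cases he : Even ℓ
      · rw [if_neg (by simp [hpar, he]), if_pos he, he.neg_one_pow]
        simp only [curvOp, pform_smul_left, hunit s hs,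
          pform_comm 2 (N s) (deriv γ s), hTN s hs, smul_smul]
        have hk : κ ^ ℓ * κ ^ (2*m+1-ℓ) = κ ^ (2*m+1) := by
          rw [← pow_add]; congr 1; omega
        ext i
        simp only [Pi.smul_apply, Pi.sub_apply, Pi.neg_apply, smul_eq_mul]
        linear_combination (-(c * N s i)) * hk
      · rw [if_pos (by simp [hpar, he]), if_neg he, (Nat.not_even_iff_odd.1 he).neg_one_pow]
        simp only [curvOp, pform_smul_left, hunit s hs,
          pform_comm 2 (N s) (deriv γ s), hTN s hs, smul_smul]
        have hk : κ ^ ℓ * κ ^ (2*m+1-ℓ) = κ ^ (2*m+1) := by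
          rw [← pow_add]; congr 1; omega
        ext i
        simp only [Pi.smul_apply, Pi.sub_apply, Pi.neg_apply, smul_eq_mul]
        linear_combination (-(c * N s i)) * hk
    unfold tensionField
    rw [h1, A _ s hs, if_neg hodd,
      Finset.sum_congr (rfl : Finset.range (m + 2 - 1) = Finset.range (m + 1)) hsum,
      Finset.sum_const, Finset.card_range, ← Nat.cast_smul_eq_nsmul ℝ, smul_smul]
    rw [← add_smul]
    congr 1
    push_cast
    ring
  have hcast : ((m : ℝ) + 2) - 1 = (m : ℝ) + 1 := by ring
  constructor
  · intro h
    obtain ⟨s, hs⟩ := hIne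
    have h0 := h s hs
    rw [key s hs] at h0
    have hN0 : N s ≠ 0 := by
      intro h'
      have := hNN s hs
      rw [h'] at this
      simp [pform] at this
    have := (smul_eq_zero.1 h0).resolve_right hN0
    have hκ' : κ ^ (2*m+1) ≠ 0 := pow_ne_zero _ (ne_of_gt hκ)
    have : κ ^ 2 + ((m : ℝ) + 1) * c = 0 := by
      rcases mul_eq_zero.1 this with h | h
      · exact absurd h (by simpa using hκ')
      · exact h
    push_cast
    linarith
  · intro h s hs
    rw [key s hs]
    have : κ ^ 2 + ((m : ℝ) + 1) * c = 0 := by push_cast at h; linarith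
    rw [this]
    simp
end
end

section
/- Fix an integer r ≥ 2 and a real number c > 0. Let γ : I → S²₁(c) ⊂ ℝ³ be a smooth space-like curve parametrized by arc length, i.e. ⟪T,T⟫₁ = 1 where T = γ′, with constant nonzero curvature: there exist a constant κ > 0 and a smooth vector field N along γ, tangent to the quadric, with ⟪N,N⟫₁ = −1, ⟪T,N⟫₁ = 0, ∇T = −κN and ∇N = −κT. Then γ is not r-harmonic: the r-tension field τ_r(γ) does not vanish identically. In particular there exists no space-like proper r-harmonic curve of constant curvature in the de Sitter plane S²₁(c). -/
open scoped BigOperators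

noncomputable section

lemma pform_zero_left (t : ℕ) {n : ℕ} (y : Fin n → ℝ) : pform t 0 y = 0 := by
  simp [pform]

/-- `cov` is homogeneous for functions that locally agree with a scalar multiple. -/
lemma cov_smul_eventually (c : ℝ) (γ X F : ℝ → Fin 3 → ℝ) (a : ℝ) (s : ℝ)
    (hX : X =ᶠ[nhds s] fun u => a • F u) (hF : DifferentiableAt ℝ F s) :
    cov 1 c γ X s = a • cov 1 c γ F s := by
  have hd : deriv X s = a • deriv F s := by
    rw [hX.deriv_eq]; exact deriv_const_smul a hF
  simp only [cov, hd, pform_smul_left, smul_sub, smul_smul]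
  ring_nf

/-- There is no space-like proper `r`-harmonic curve of constant curvature in
the de Sitter plane `S²₁(c) ⊂ ℝ³₁` (`c > 0`): the `r`-tension field never vanishes identically. -/
theorem stmt_1 (r : ℕ) (hr : 2 ≤ r) (c : ℝ) (hc : 0 < c)
    (I : Set ℝ) (hIopen : IsOpen I) (hIne : I.Nonempty)
    (γ N : ℝ → Fin 3 → ℝ)
    (hγ : ContDiffOn ℝ (⊤ : ℕ∞) γ I) (hN : ContDiffOn ℝ (⊤ : ℕ∞) N I)
    (hquad : ∀ s ∈ I, pform 1 (γ s) (γ s) = 1 / c)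
    (hunit : ∀ s ∈ I, pform 1 (deriv γ s) (deriv γ s) = 1)
    (κ : ℝ) (hκ : 0 < κ)
    (hNtan : ∀ s ∈ I, pform 1 (N s) (γ s) = 0)
    (hNN : ∀ s ∈ I, pform 1 (N s) (N s) = -1)
    (hTN : ∀ s ∈ I, pform 1 (deriv γ s) (N s) = 0)
    (hFr1 : ∀ s ∈ I, cov 1 c γ (deriv γ) s = (-κ) • N s)
    (hFr2 : ∀ s ∈ I, cov 1 c γ N s = (-κ) • deriv γ s) :
    ∃ s ∈ I, tensionField 1 c r γ s ≠ 0 := by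
  obtain ⟨s₀, hs₀⟩ := hIne
  -- differentiability of T = deriv γ and N on I
  have hgi : ContDiffOn ℝ (⊤ : ℕ∞) γ I := hγ.of_le (by simp)
  have hTi : ContDiffOn ℝ (⊤ : ℕ∞) (deriv γ) I :=
    ((contDiffOn_infty_iff_deriv_of_isOpen hIopen).1 hgi).2
  have hTdiff : ∀ s ∈ I, DifferentiableAt ℝ (deriv γ) s := fun s hs =>
    (hTi.differentiableOn (by simp)).differentiableAt (hIopen.mem_nhds hs)
  have hNdiff : ∀ s ∈ I, DifferentiableAt ℝ N s := fun s hs =>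
    ((hN.of_le (by simp) : ContDiffOn ℝ (⊤ : ℕ∞) N I).differentiableOn
      (by simp)).differentiableAt (hIopen.mem_nhds hs)
  -- the key induction on iterated covariant derivatives
  have key : ∀ k, ∀ s ∈ I, (cov 1 c γ)^[k] (deriv γ) s =
      if Even k then (κ^k) • deriv γ s else (-(κ^k)) • N s := by
    intro k
    induction k with
    | zero => intro s hs; simp
    | succ k ih =>
      intro s hs
      rw [Function.iterate_succ_apply']
      by_cases hk : Even k
      · have heq : (cov 1 c γ)^[k] (deriv γ) =ᶠ[nhds s] fun u => (κ^k) • deriv γ u := by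
          filter_upwards [hIopen.mem_nhds hs] with u hu
          simpa [hk] using ih u hu
        rw [cov_smul_eventually c γ _ (deriv γ) (κ^k) s heq (hTdiff s hs), hFr1 s hs]
        have : ¬ Even (k+1) := by simpa using Nat.even_add_one.not_left.2 (by simpa using hk)
        simp only [this, if_false, smul_smul, pow_succ]
        ring_nf
      · have heq : (cov 1 c γ)^[k] (deriv γ) =ᶠ[nhds s] fun u => (-(κ^k)) • N u := by
          filter_upwards [hIopen.mem_nhds hs] with u hu
          simpa [hk] using ih u hu
        rw [cov_smul_eventually c γ _ N (-(κ^k)) s heq (hNdiff s hs), hFr2 s hs]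
        have : Even (k+1) := Nat.even_add_one.2 hk
        simp only [this, if_true, smul_smul, pow_succ]
        ring_nf
  refine ⟨s₀, hs₀, ?_⟩
  have hodd : ¬ Even (2*r-1) := by rw [Nat.even_iff]; omega
  have hN0 : N s₀ ≠ 0 := by
    intro h
    have := hNN s₀ hs₀
    rw [h] at this
    simp [pform_zero_left] at this
  -- each summand equals -(c * κ^(2r-3)) • N s₀
  have hsum : ∀ ℓ ∈ Finset.range (r-1),
      ((-1 : ℝ)^ℓ) • curvOp 1 c ((cov 1 c γ)^[2*r-3-ℓ] (deriv γ) s₀)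
        ((cov 1 c γ)^[ℓ] (deriv γ) s₀) (deriv γ s₀)
      = (-(c * κ^(2*r-3))) • N s₀ := by
    intro ℓ hℓ
    rw [Finset.mem_range] at hℓ
    have hm : 2*r-3-ℓ + ℓ = 2*r-3 := by omega
    have hκm : κ^(2*r-3-ℓ) * κ^ℓ = κ^(2*r-3) := by rw [← pow_add, hm]
    rcases Nat.even_or_odd ℓ with he | ho
    · have hmo : ¬ Even (2*r-3-ℓ) := by
        rw [Nat.even_iff] at *; omega
      rw [key ℓ s₀ hs₀, key (2*r-3-ℓ) s₀ hs₀, if_pos he, if_neg hmo]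
      simp only [curvOp, pform_smul_left, hunit s₀ hs₀,
        pform_comm 1 (N s₀), hTN s₀ hs₀, he.neg_one_pow]
      simp only [smul_sub, smul_smul, mul_zero, zero_mul, zero_smul, sub_zero,
        one_mul, mul_one]
      congr 1
      rw [← hκm]
      all_goals ring
    · have hmo : Even (2*r-3-ℓ) := by
        rw [Nat.even_iff] at *; rw [Nat.odd_iff] at ho; omega
      rw [key ℓ s₀ hs₀, key (2*r-3-ℓ) s₀ hs₀, if_neg (Nat.not_even_iff_odd.2 ho), if_pos hmo]
      simp only [curvOp, pform_smul_left, hunit s₀ hs₀,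
        pform_comm 1 (N s₀), hTN s₀ hs₀, ho.neg_one_pow]
      simp only [smul_sub, smul_smul, mul_zero, zero_mul, zero_smul, sub_zero, zero_sub,
        one_mul, mul_one, neg_smul, neg_neg, smul_neg, neg_mul, mul_neg]
      congr 1
      rw [← hκm]
      all_goals ring
  have hτ : tensionField 1 c r γ s₀
      = (-(κ^(2*r-1)) - ((r-1 : ℕ) : ℝ) * (c * κ^(2*r-3))) • N s₀ := by
    rw [tensionField, key (2*r-1) s₀ hs₀, if_neg hodd, Finset.sum_congr rfl hsum,
      Finset.sum_const, Finset.card_range]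
    rw [← Nat.cast_smul_eq_nsmul ℝ, smul_smul, sub_smul]
    ring_nf
    rw [sub_eq_add_neg, ← neg_smul]
  rw [hτ]
  have hcoef : (-(κ^(2*r-1)) - ((r-1 : ℕ) : ℝ) * (c * κ^(2*r-3))) ≠ 0 := by
    have h1 : (0:ℝ) < κ^(2*r-1) := pow_pos hκ _
    have h2 : (0:ℝ) ≤ ((r-1 : ℕ) : ℝ) * (c * κ^(2*r-3)) := by positivity
    nlinarith
  exact smul_ne_zero hcoef hN0
end
end

section
/- Fix an integer r ≥ 2. Let γ : I → ℝ³ be a smooth curve in the Minkowski space ℝ³₁, parametrized by arc length, which is a 3-Frenet helix: there exist constants κ, τ > 0, smooth fields T = γ′, N, B : I → ℝ³ with ⟪F_i,F_j⟫₁ = ε_i δ_ij for F₁ = T, F₂ = N, F₃ = B (ε_i ∈ {−1,1}; since the frame is an orthonormal basis of ℝ³₁, exactly one of ε₁, ε₂, ε₃ equals −1), satisfying T′ = ε₂κN, N′ = −ε₁κT + ε₃τB, B′ = −ε₂τN. Then γ is proper r-harmonic (γ^{(2r)} ≡ 0; note γ″ = ε₂κN ≠ 0) if and only if ε₂ = 1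 (the normal N is space-like) and κ² = τ². -/
open scoped BigOperators

noncomputable section

/-- A `3`-Frenet helix in the Minkowski space `ℝ³₁` is proper `r`-harmonic
(`γ⁽²ʳ⁾ ≡ 0`) iff its normal is space-like (`ε₂ = 1`) and `κ² = τ²`. -/
theorem stmt_7 (r : ℕ) (hr : 2 ≤ r)
    (I : Set ℝ) (hIopen : IsOpen I) (hIne : I.Nonempty)
    (γ N B : ℝ → Fin 3 → ℝ)
    (hγ : ContDiffOn ℝ (⊤ : ℕ∞) γ I) (hN : ContDiffOn ℝ (⊤ : ℕ∞) N I) (hB : ContDiffOn ℝ (⊤ : ℕ∞) B I)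
    (ε₁ ε₂ ε₃ : ℝ)
    (hone : (ε₁ = -1 ∧ ε₂ = 1 ∧ ε₃ = 1) ∨ (ε₁ = 1 ∧ ε₂ = -1 ∧ ε₃ = 1) ∨
            (ε₁ = 1 ∧ ε₂ = 1 ∧ ε₃ = -1))
    (κ τ : ℝ) (hκ : 0 < κ) (hτ : 0 < τ)
    (hTT : ∀ s ∈ I, pform 1 (deriv γ s) (deriv γ s) = ε₁)
    (hNN : ∀ s ∈ I, pform 1 (N s) (N s) = ε₂)
    (hBB : ∀ s ∈ I, pform 1 (B s) (B s) = ε₃)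
    (hTN : ∀ s ∈ I, pform 1 (deriv γ s) (N s) = 0)
    (hTB : ∀ s ∈ I, pform 1 (deriv γ s) (B s) = 0)
    (hNB : ∀ s ∈ I, pform 1 (N s) (B s) = 0)
    (hFr1 : ∀ s ∈ I, deriv (deriv γ) s = (ε₂ * κ) • N s)
    (hFr2 : ∀ s ∈ I, deriv N s = (-(ε₁ * κ)) • deriv γ s + (ε₃ * τ) • B s)
    (hFr3 : ∀ s ∈ I, deriv B s = (-(ε₂ * τ)) • N s) :
    (∀ s ∈ I, iteratedDeriv (2 * r) γ s = 0) ↔ (ε₂ = 1 ∧ κ ^ 2 = τ ^ 2) := by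

  classical
  have hε₂ne : ε₂ ≠ 0 := by
    rcases hone with ⟨_,h,_⟩|⟨_,h,_⟩|⟨_,h,_⟩ <;> rw [h] <;> norm_num
  have hNne : ∀ s ∈ I, N s ≠ 0 := by
    intro s hs h0
    have h1 := hNN s hs
    rw [h0] at h1
    simp [pform] at h1
    exact hε₂ne h1.symm
  have hNd : ∀ s ∈ I, DifferentiableAt ℝ N s := fun s hs =>
    (hN.contDiffAt (hIopen.mem_nhds hs)).differentiableAt (by simp)
  have hBd : ∀ s ∈ I, DifferentiableAt ℝ B s := fun s hs =>
    (hB.contDiffAt (hIopen.mem_nhds hs)).differentiableAt (by simp)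
  have hcoef : ε₂ * κ ≠ 0 := mul_ne_zero hε₂ne hκ.ne'
  have hγ'd : ∀ s ∈ I, DifferentiableAt ℝ (deriv γ) s := by
    intro s hs
    by_contra hcon
    have h0 := deriv_zero_of_not_differentiableAt hcon
    rw [hFr1 s hs] at h0
    exact hNne s hs ((smul_eq_zero.mp h0).resolve_left hcoef)
  have key : ∀ k : ℕ, ∀ s ∈ I, deriv^[2*k+2] γ s
      = ((-(ε₂*(ε₁*κ^2+ε₃*τ^2)))^k * (ε₂*κ)) • N s := by
    intro k
    induction k with
    | zero =>
      intro s hs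
      have h2 : deriv^[2*0+2] γ s = deriv (deriv γ) s := rfl
      rw [h2, hFr1 s hs, pow_zero, one_mul]
    | succ k ih =>
      have hodd : ∀ s ∈ I, deriv^[2*k+3] γ s
          = (((-(ε₂*(ε₁*κ^2+ε₃*τ^2)))^k*(ε₂*κ)) * (-(ε₁*κ))) • deriv γ s
            + (((-(ε₂*(ε₁*κ^2+ε₃*τ^2)))^k*(ε₂*κ)) * (ε₃*τ)) • B s := by
        intro s hs
        have heq : deriv^[2*k+2] γ =ᶠ[nhds s]
            fun u => ((-(ε₂*(ε₁*κ^2+ε₃*τ^2)))^k*(ε₂*κ)) • N u := by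
          filter_upwards [hIopen.mem_nhds hs] with u hu using ih u hu
        have h1 : deriv^[2*k+3] γ s = deriv (deriv^[2*k+2] γ) s := by
          rw [show 2*k+3 = (2*k+2)+1 from rfl, Function.iterate_succ_apply']
        rw [h1, heq.deriv_eq, deriv_fun_const_smul _ (hNd s hs), hFr2 s hs,
          smul_add, smul_smul, smul_smul]
      intro s hs
      have heq : deriv^[2*k+3] γ =ᶠ[nhds s] fun u =>
          (((-(ε₂*(ε₁*κ^2+ε₃*τ^2)))^k*(ε₂*κ)) * (-(ε₁*κ))) • deriv γ u
            + (((-(ε₂*(ε₁*κ^2+ε₃*τ^2)))^k*(ε₂*κ)) * (ε₃*τ)) • B u := by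
        filter_upwards [hIopen.mem_nhds hs] with u hu using hodd u hu
      have h1 : deriv^[2*(k+1)+2] γ s = deriv (deriv^[2*k+3] γ) s := by
        rw [show 2*(k+1)+2 = (2*k+3)+1 by ring, Function.iterate_succ_apply']
      rw [h1, heq.deriv_eq,
        deriv_fun_add ((hγ'd s hs).fun_const_smul _) ((hBd s hs).fun_const_smul _),
        deriv_fun_const_smul _ (hγ'd s hs), deriv_fun_const_smul _ (hBd s hs),
        hFr1 s hs, hFr3 s hs, smul_smul, smul_smul, ← add_smul]
      congr 1
      ring
  have hfin : ∀ s ∈ I, iteratedDeriv (2*r) γ s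
      = ((-(ε₂*(ε₁*κ^2+ε₃*τ^2)))^(r-1) * (ε₂*κ)) • N s := by
    intro s hs
    have h2r : 2*r = 2*(r-1)+2 := by omega
    rw [iteratedDeriv_eq_iterate, h2r]
    exact key (r-1) s hs
  constructor
  · intro h
    obtain ⟨s₀, hs₀⟩ := hIne
    have h0 := h s₀ hs₀
    rw [hfin s₀ hs₀] at h0
    have hco : (-(ε₂*(ε₁*κ^2+ε₃*τ^2)))^(r-1) * (ε₂*κ) = 0 :=
      (smul_eq_zero.mp h0).resolve_right (hNne s₀ hs₀)
    have hane : -(ε₂*(ε₁*κ^2+ε₃*τ^2)) = 0 := by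
      have := (mul_eq_zero.mp hco).resolve_right hcoef
      exact pow_eq_zero_iff (by omega : r - 1 ≠ 0) |>.mp this
    have ha0 : ε₁*κ^2+ε₃*τ^2 = 0 :=
      (mul_eq_zero.mp (neg_eq_zero.mp hane)).resolve_left hε₂ne
    rcases hone with ⟨h1,h2,h3⟩|⟨h1,h2,h3⟩|⟨h1,h2,h3⟩
    · subst h1; subst h2; subst h3; exact ⟨rfl, by linarith⟩
    · exfalso; subst h1; subst h3; nlinarith [pow_pos hκ 2, pow_pos hτ 2]
    · subst h1; subst h2; subst h3; exact ⟨rfl, by linarith⟩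
  · rintro ⟨hε2, hκτ⟩
    have ha0 : ε₁*κ^2+ε₃*τ^2 = 0 := by
      rcases hone with ⟨h1,h2,h3⟩|⟨h1,h2,h3⟩|⟨h1,h2,h3⟩
      · rw [h1, h3]; linarith
      · rw [h2] at hε2; norm_num at hε2
      · rw [h1, h3]; linarith
    intro s hs
    rw [hfin s hs, ha0]
    simp [zero_pow (show r-1 ≠ 0 by omega)]
end
end

section
/- Fix a real number c < 0. Let γ be a 3-Frenet helix in the anti-de Sitter space H³₁(c) with constant curvatures κ, τ > 0 and signs (ε₁,ε₂,ε₃) ∈ {−1,1}³; since the frame {T,N,B} is an orthonormal basis of the index-1 tangent space, exactly one of ε₁, ε₂, ε₃ equals −1 (so ε₃ = −ε₁ε₂). Then: (i) if ε₂ = 1 (N space-like), γ is proper biharmonic (τ₂(γ) ≡ 0) if and only if τ² − κ² = −c; (ii) if ε₂ = −1 (N time-like), γ is proper biharmonic if and only if τ² + κ² = −c. -/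
open scoped BigOperators

noncomputable section

lemma pform_add_left (t : ℕ) {n : ℕ} (x y z : Fin n → ℝ) :
    pform t (x + y) z = pform t x z + pform t y z := by
  simp only [pform, Pi.add_apply, ← Finset.sum_add_distrib]
  exact Finset.sum_congr rfl fun i _ => by split <;> ring

/-- Biharmonicity of a `3`-Frenet helix in the anti-de Sitter space
`H³₁(c) ⊂ ℝ⁴₂` (`c < 0`): if `N` is space-like, `τ₂(γ) ≡ 0 ↔ τ² − κ² = −c`; if `N` is
time-like, `τ₂(γ) ≡ 0 ↔ τ² + κ² = −c`. -/
theorem stmt_8 (c : ℝ) (hc : c < 0)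
    (I : Set ℝ) (hIopen : IsOpen I) (hIne : I.Nonempty)
    (γ N B : ℝ → Fin 4 → ℝ)
    (hγ : ContDiffOn ℝ (⊤ : ℕ∞) γ I) (hN : ContDiffOn ℝ (⊤ : ℕ∞) N I) (hB : ContDiffOn ℝ (⊤ : ℕ∞) B I)
    (ε₁ ε₂ ε₃ : ℝ)
    (hone : (ε₁ = -1 ∧ ε₂ = 1 ∧ ε₃ = 1) ∨ (ε₁ = 1 ∧ ε₂ = -1 ∧ ε₃ = 1) ∨
            (ε₁ = 1 ∧ ε₂ = 1 ∧ ε₃ = -1))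
    (κ τ : ℝ) (hκ : 0 < κ) (hτ : 0 < τ)
    (hquad : ∀ s ∈ I, pform 2 (γ s) (γ s) = 1 / c)
    (hTT : ∀ s ∈ I, pform 2 (deriv γ s) (deriv γ s) = ε₁)
    (hNN : ∀ s ∈ I, pform 2 (N s) (N s) = ε₂)
    (hBB : ∀ s ∈ I, pform 2 (B s) (B s) = ε₃)
    (hTN : ∀ s ∈ I, pform 2 (deriv γ s) (N s) = 0)
    (hTB : ∀ s ∈ I, pform 2 (deriv γ s) (B s) = 0)
    (hNB : ∀ s ∈ I, pform 2 (N s) (B s) = 0)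
    (hNtan : ∀ s ∈ I, pform 2 (N s) (γ s) = 0)
    (hBtan : ∀ s ∈ I, pform 2 (B s) (γ s) = 0)
    (hFr1 : ∀ s ∈ I, cov 2 c γ (deriv γ) s = (ε₂ * κ) • N s)
    (hFr2 : ∀ s ∈ I, cov 2 c γ N s = (-(ε₁ * κ)) • deriv γ s + (ε₃ * τ) • B s)
    (hFr3 : ∀ s ∈ I, cov 2 c γ B s = (-(ε₂ * τ)) • N s) :
    (ε₂ = 1 → ((∀ s ∈ I, tensionField 2 c 2 γ s = 0) ↔ τ ^ 2 - κ ^ 2 = -c)) ∧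
    (ε₂ = -1 → ((∀ s ∈ I, tensionField 2 c 2 γ s = 0) ↔ τ ^ 2 + κ ^ 2 = -c)) := by
  
  have hmemI : ∀ s ∈ I, I ∈ nhds s := fun s hs => hIopen.mem_nhds hs
  have hdN : ∀ s ∈ I, DifferentiableAt ℝ N s := fun s hs =>
    ((hN.contDiffAt (hmemI s hs)).differentiableAt (by simp))
  have hdB : ∀ s ∈ I, DifferentiableAt ℝ B s := fun s hs =>
    ((hB.contDiffAt (hmemI s hs)).differentiableAt (by simp))
  have hγ' : ContDiffOn ℝ 1 (deriv γ) I := hγ.deriv_of_isOpen hIopen (WithTop.coe_le_coe.mpr le_top)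
  have hdT : ∀ s ∈ I, DifferentiableAt ℝ (deriv γ) s := fun s hs =>
    ((hγ'.contDiffAt (hmemI s hs)).differentiableAt one_ne_zero)
  -- second covariant derivative
  have hT2 : ∀ s ∈ I, (cov 2 c γ)^[2] (deriv γ) s
      = (ε₂ * κ) • ((-(ε₁ * κ)) • deriv γ s + (ε₃ * τ) • B s) := by
    intro s hs
    have hev : cov 2 c γ (deriv γ) =ᶠ[nhds s] fun u => (ε₂ * κ) • N u :=
      Filter.eventuallyEq_of_mem (hmemI s hs) (fun u hu => hFr1 u hu)
    have hder : deriv (cov 2 c γ (deriv γ)) s = (ε₂ * κ) • deriv N s := by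
      rw [hev.deriv_eq, deriv_fun_const_smul _ (hdN s hs)]
    have key : (cov 2 c γ)^[2] (deriv γ) s = (ε₂ * κ) • cov 2 c γ N s := by
      show cov 2 c γ (cov 2 c γ (deriv γ)) s = _
      simp only [cov, hder, pform_smul_left]
      module
    rw [key, hFr2 s hs]
  -- third covariant derivative
  have hT3 : ∀ s ∈ I, (cov 2 c γ)^[3] (deriv γ) s
      = (ε₂ * κ) • ((-(ε₁ * κ)) • ((ε₂ * κ) • N s) + (ε₃ * τ) • ((-(ε₂ * τ)) • N s)) := by
    intro s hs
    have hev : (cov 2 c γ)^[2] (deriv γ)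
        =ᶠ[nhds s] fun u => (ε₂ * κ) • ((-(ε₁ * κ)) • deriv γ u + (ε₃ * τ) • B u) :=
      Filter.eventuallyEq_of_mem (hmemI s hs) (fun u hu => hT2 u hu)
    have hder : deriv ((cov 2 c γ)^[2] (deriv γ)) s
        = (ε₂ * κ) • ((-(ε₁ * κ)) • deriv (deriv γ) s + (ε₃ * τ) • deriv B s) := by
      rw [hev.deriv_eq,
        deriv_fun_const_smul _ (f := fun u => (-(ε₁ * κ)) • deriv γ u + (ε₃ * τ) • B u)
          (((hdT s hs).const_smul (-(ε₁ * κ))).add ((hdB s hs).const_smul (ε₃ * τ))),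
        deriv_fun_add (f := fun u => (-(ε₁ * κ)) • deriv γ u) (g := fun u => (ε₃ * τ) • B u)
          ((hdT s hs).const_smul (-(ε₁ * κ))) ((hdB s hs).const_smul (ε₃ * τ)),
        deriv_fun_const_smul _ (hdT s hs), deriv_fun_const_smul _ (hdB s hs)]
    have key : (cov 2 c γ)^[3] (deriv γ) s
        = (ε₂ * κ) • ((-(ε₁ * κ)) • cov 2 c γ (deriv γ) s + (ε₃ * τ) • cov 2 c γ B s) := by
      show cov 2 c γ ((cov 2 c γ)^[2] (deriv γ)) s = _
      simp only [cov, hder, pform_smul_left, pform_add_left]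
      module
    rw [key, hFr1 s hs, hFr3 s hs]
  -- the tension field is a multiple of N
  set A : ℝ := (ε₂ * κ) * ((-(ε₁ * κ)) * (ε₂ * κ) + (ε₃ * τ) * (-(ε₂ * τ)))
      + c * (ε₁ * (ε₂ * κ)) with hAdef
  have htens : ∀ s ∈ I, tensionField 2 c 2 γ s = A • N s := by
    intro s hs
    have hcurv : curvOp 2 c ((cov 2 c γ)^[1] (deriv γ) s) ((cov 2 c γ)^[0] (deriv γ) s)
        (deriv γ s) = (c * (ε₁ * (ε₂ * κ))) • N s := by
      simp only [Function.iterate_one, Function.iterate_zero, id_eq, curvOp, hFr1 s hs,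
        pform_smul_left, hTT s hs]
      rw [pform_comm, hTN s hs]
      module
    have hexp : tensionField 2 c 2 γ s
        = (cov 2 c γ)^[3] (deriv γ) s
          + (1 : ℝ) • curvOp 2 c ((cov 2 c γ)^[1] (deriv γ) s)
              ((cov 2 c γ)^[0] (deriv γ) s) (deriv γ s) := by
      simp [tensionField]
    rw [hexp, hcurv, hT3 s hs, hAdef]
    module
  have hε₂ : ε₂ = 1 ∨ ε₂ = -1 := by
    rcases hone with ⟨_, h, _⟩ | ⟨_, h, _⟩ | ⟨_, h, _⟩ <;> simp [h]
  have key : (∀ s ∈ I, tensionField 2 c 2 γ s = 0) ↔ A = 0 := by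
    constructor
    · intro h
      obtain ⟨s₀, hs₀⟩ := hIne
      have h1 : A • N s₀ = 0 := by rw [← htens s₀ hs₀]; exact h s₀ hs₀
      by_contra hA
      have hN0 : N s₀ = 0 := by
        rcases smul_eq_zero.mp h1 with h' | h'
        · exact absurd h' hA
        · exact h'
      have h2 := hNN s₀ hs₀
      rw [hN0] at h2
      simp [pform] at h2
      rcases hε₂ with h' | h' <;> rw [h'] at h2 <;> norm_num at h2
    · intro h s hs
      rw [htens s hs, h, zero_smul]
  simp only [key]
  constructor
  · intro h2
    rcases hone with ⟨h1, h2', h3⟩ | ⟨h1, h2', h3⟩ | ⟨h1, h2', h3⟩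
    · have hA : A = κ * (κ ^ 2 - τ ^ 2 - c) := by rw [hAdef, h1, h2', h3]; ring
      rw [hA, mul_eq_zero]
      constructor
      · rintro (h | h)
        · exact absurd h hκ.ne'
        · linarith
      · intro h; right; linarith
    · rw [h2'] at h2; norm_num at h2
    · have hA : A = κ * (τ ^ 2 - κ ^ 2 + c) := by rw [hAdef, h1, h2', h3]; ring
      rw [hA, mul_eq_zero]
      constructor
      · rintro (h | h)
        · exact absurd h hκ.ne'
        · linarith
      · intro h; right; linarith
  · intro h2
    rcases hone with ⟨h1, h2', h3⟩ | ⟨h1, h2', h3⟩ | ⟨h1, h2', h3⟩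
    · rw [h2'] at h2; norm_num at h2
    · have hA : A = κ * (-(κ ^ 2) - τ ^ 2 - c) := by rw [hAdef, h1, h2', h3]; ring
      rw [hA, mul_eq_zero]
      constructor
      · rintro (h | h)
        · exact absurd h hκ.ne'
        · linarith
      · intro h; right; linarith
    · rw [h2'] at h2; norm_num at h2
end
end

section
/- Fix an integer r ≥ 3 and a real number c < 0. Let γ be a 3-Frenet helix in the anti-de Sitter space H³₁(c) with constant curvatures κ, τ > 0 and signs (ε₁,ε₂,ε₃) ∈ {−1,1}³; since the frame {T,N,B} is an orthonormal basis of the index-1 tangent space, exactly one of ε₁, ε₂, ε₃ equals −1. Then: (i) if ε₂ = 1 (N space-like), γ is proper r-harmonic (τ_r(γ) ≡ 0) if and only if [r > 3 and κ² = τ²], or [κ² ≤ −c/(4(r−2)) and τ² = (2κ² − c + √(c² + 4c(r−2)κ²))/2 or τ² = (2κ² − c − √(c² + 4c(r−2)κ²))/2]; (ii) if ε₂ = −1 (N time-like), γ is proper r-harmonic if and only if κ² ≤ −c(r−1) and τ² = (−2κ² − c + √(c² − 4c(r−2)κ²))/2. -/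
open scoped BigOperators

noncomputable section

lemma pform_combo (t : ℕ) {n : ℕ} (p q w : ℝ) (x y z v : Fin n → ℝ) :
    pform t (p • x + q • y + w • z) v
      = p * pform t x v + q * pform t y v + w * pform t z v := by
  unfold pform
  rw [Finset.mul_sum, Finset.mul_sum, Finset.mul_sum, ← Finset.sum_add_distrib,
    ← Finset.sum_add_distrib]
  apply Finset.sum_congr rfl; intro i _
  split <;> simp [Pi.add_apply, Pi.smul_apply, smul_eq_mul] <;> ring

lemma cov_step {c : ℝ} {I : Set ℝ} (hIopen : IsOpen I)
    {γ N B : ℝ → Fin 4 → ℝ} {ε₁ ε₂ ε₃ κ τ : ℝ}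
    (hdT : ∀ s ∈ I, DifferentiableAt ℝ (deriv γ) s)
    (hdN : ∀ s ∈ I, DifferentiableAt ℝ N s)
    (hdB : ∀ s ∈ I, DifferentiableAt ℝ B s)
    (hFr1 : ∀ s ∈ I, cov 2 c γ (deriv γ) s = (ε₂ * κ) • N s)
    (hFr2 : ∀ s ∈ I, cov 2 c γ N s = (-(ε₁ * κ)) • deriv γ s + (ε₃ * τ) • B s)
    (hFr3 : ∀ s ∈ I, cov 2 c γ B s = (-(ε₂ * τ)) • N s)
    (p q w : ℝ) (X : ℝ → Fin 4 → ℝ)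
    (hX : ∀ s ∈ I, X s = p • deriv γ s + q • N s + w • B s) :
    ∀ s ∈ I, cov 2 c γ X s
      = (-(ε₁*κ*q)) • deriv γ s + (ε₂*κ*p - ε₂*τ*w) • N s + (ε₃*τ*q) • B s := by
  intro s hs
  have hev : X =ᶠ[nhds s] fun u => p • deriv γ u + q • N u + w • B u := by
    filter_upwards [hIopen.mem_nhds hs] with u hu using hX u hu
  have hdX : deriv X s = p • deriv (deriv γ) s + q • deriv N s + w • deriv B s := by
    rw [hev.deriv_eq]
    rw [deriv_fun_add (f := fun u => p • deriv γ u + q • N u) (g := fun u => w • B u) (((hdT s hs).const_smul p).add ((hdN s hs).const_smul q))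
      ((hdB s hs).const_smul w),
      deriv_fun_add (f := fun u => p • deriv γ u) (g := fun u => q • N u) ((hdT s hs).const_smul p) ((hdN s hs).const_smul q),
      deriv_fun_const_smul p (hdT s hs), deriv_fun_const_smul q (hdN s hs),
      deriv_fun_const_smul w (hdB s hs)]
  have key : cov 2 c γ X s
      = p • cov 2 c γ (deriv γ) s + q • cov 2 c γ N s + w • cov 2 c γ B s := by
    simp only [cov, hdX, pform_combo]
    funext i
    simp only [Pi.add_apply, Pi.sub_apply, Pi.smul_apply, smul_eq_mul]
    ring
  rw [key, hFr1 s hs, hFr2 s hs, hFr3 s hs]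
  funext i
  simp only [Pi.add_apply, Pi.smul_apply, smul_eq_mul]
  ring

lemma cov_iter {c : ℝ} {I : Set ℝ} (hIopen : IsOpen I)
    {γ N B : ℝ → Fin 4 → ℝ} {ε₁ ε₂ ε₃ κ τ : ℝ}
    (hdT : ∀ s ∈ I, DifferentiableAt ℝ (deriv γ) s)
    (hdN : ∀ s ∈ I, DifferentiableAt ℝ N s)
    (hdB : ∀ s ∈ I, DifferentiableAt ℝ B s)
    (hFr1 : ∀ s ∈ I, cov 2 c γ (deriv γ) s = (ε₂ * κ) • N s)
    (hFr2 : ∀ s ∈ I, cov 2 c γ N s = (-(ε₁ * κ)) • deriv γ s + (ε₃ * τ) • B s)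
    (hFr3 : ∀ s ∈ I, cov 2 c γ B s = (-(ε₂ * τ)) • N s)
    (a : ℝ) (ha : a = -(ε₁*ε₂*κ^2 + ε₂*ε₃*τ^2)) :
    ∀ k : ℕ,
      (∀ s ∈ I, (cov 2 c γ)^[2*k+1] (deriv γ) s
        = (0:ℝ) • deriv γ s + (a^k * (ε₂*κ)) • N s + (0:ℝ) • B s) ∧
      (∀ s ∈ I, (cov 2 c γ)^[2*k+2] (deriv γ) s
        = (a^k * (-(ε₁*ε₂)*κ^2)) • deriv γ s + (0:ℝ) • N s + (a^k * (ε₂*ε₃*κ*τ)) • B s) := by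
  have step := cov_step hIopen hdT hdN hdB hFr1 hFr2 hFr3
  intro k
  induction k with
  | zero =>
    have hodd : ∀ s ∈ I, (cov 2 c γ)^[2*0+1] (deriv γ) s
        = (0:ℝ) • deriv γ s + (a^0 * (ε₂*κ)) • N s + (0:ℝ) • B s := by
      intro s hs
      rw [show 2*0+1 = 1 from rfl, Function.iterate_one, hFr1 s hs]; funext i
      simp only [Pi.add_apply, Pi.smul_apply, smul_eq_mul]; ring
    refine ⟨hodd, ?_⟩
    intro s hs
    have h2 := step 0 (a^0 * (ε₂*κ)) 0 ((cov 2 c γ)^[2*0+1] (deriv γ)) hodd s hs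
    rw [show 2*0+2 = (2*0+1)+1 from rfl, Function.iterate_succ_apply', h2]
    funext i
    simp only [Pi.add_apply, Pi.smul_apply, smul_eq_mul]; ring
  | succ k ih =>
    have hodd : ∀ s ∈ I, (cov 2 c γ)^[2*(k+1)+1] (deriv γ) s
        = (0:ℝ) • deriv γ s + (a^(k+1) * (ε₂*κ)) • N s + (0:ℝ) • B s := by
      intro s hs
      have h2 := step (a^k * (-(ε₁*ε₂)*κ^2)) 0 (a^k * (ε₂*ε₃*κ*τ))
        ((cov 2 c γ)^[2*k+2] (deriv γ)) ih.2 s hs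
      rw [show 2*(k+1)+1 = (2*k+2)+1 by ring, Function.iterate_succ_apply', h2]
      funext i
      simp only [Pi.add_apply, Pi.smul_apply, smul_eq_mul]
      rw [pow_succ, ha]; ring
    refine ⟨hodd, ?_⟩
    intro s hs
    have h2 := step 0 (a^(k+1) * (ε₂*κ)) 0 ((cov 2 c γ)^[2*(k+1)+1] (deriv γ)) hodd s hs
    rw [show 2*(k+1)+2 = (2*(k+1)+1)+1 from rfl, Function.iterate_succ_apply', h2]
    funext i
    simp only [Pi.add_apply, Pi.smul_apply, smul_eq_mul]; ring

lemma tens_formula {c : ℝ} {I : Set ℝ} (hIopen : IsOpen I)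
    {γ N B : ℝ → Fin 4 → ℝ} {ε₁ ε₂ ε₃ κ τ : ℝ}
    (hdT : ∀ s ∈ I, DifferentiableAt ℝ (deriv γ) s)
    (hdN : ∀ s ∈ I, DifferentiableAt ℝ N s)
    (hdB : ∀ s ∈ I, DifferentiableAt ℝ B s)
    (hTT : ∀ s ∈ I, pform 2 (deriv γ s) (deriv γ s) = ε₁)
    (hTN : ∀ s ∈ I, pform 2 (deriv γ s) (N s) = 0)
    (hTB : ∀ s ∈ I, pform 2 (deriv γ s) (B s) = 0)
    (hFr1 : ∀ s ∈ I, cov 2 c γ (deriv γ) s = (ε₂ * κ) • N s)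
    (hFr2 : ∀ s ∈ I, cov 2 c γ N s = (-(ε₁ * κ)) • deriv γ s + (ε₃ * τ) • B s)
    (hFr3 : ∀ s ∈ I, cov 2 c γ B s = (-(ε₂ * τ)) • N s)
    (he1 : ε₁ * ε₁ = 1)
    (a : ℝ) (ha : a = -(ε₁*ε₂*κ^2 + ε₂*ε₃*τ^2))
    (r : ℕ) (hr : 3 ≤ r) :
    ∀ s ∈ I, tensionField 2 c r γ s
      = (ε₂ * κ * a^(r-3) * (a^2 + c*ε₁*a - ((r:ℝ)-2)*c*ε₂*κ^2)) • N s := by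
  obtain ⟨m, rfl⟩ : ∃ m, r = m + 3 := ⟨r - 3, by omega⟩
  have iter := cov_iter hIopen hdT hdN hdB hFr1 hFr2 hFr3 a ha
  intro s hs
  have pfT : ∀ (p q w : ℝ) (x : Fin 4 → ℝ),
      x = p • deriv γ s + q • N s + w • B s →
      pform 2 x (deriv γ s) = p * ε₁ := by
    intro p q w x hx
    rw [hx, pform_combo, hTT s hs, pform_comm 2 (N s), hTN s hs,
      pform_comm 2 (B s), hTB s hs]
    ring
  have E : ℝ := 0
  -- term for ℓ = j+1, j ∈ range (m+1)
  have hterm : ∀ j ∈ Finset.range (m+1),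
      ((-1 : ℝ)^(j+1)) • curvOp 2 c ((cov 2 c γ)^[2*(m+3)-3-(j+1)] (deriv γ) s)
        ((cov 2 c γ)^[j+1] (deriv γ) s) (deriv γ s)
      = (c*ε₁*((-(ε₁*ε₂))*κ^2)*(ε₂*κ)*a^m) • N s := by
    intro j hj
    have hjm : j ≤ m := by simpa using Nat.lt_succ_iff.mp (Finset.mem_range.mp hj)
    rcases Nat.even_or_odd j with ⟨u, hu⟩ | ⟨u, hu⟩
    · -- j = 2u, ℓ = 2u+1 odd
      subst hu
      have hu2 : u ≤ m := by omega
      have hX := (iter (m-u)).2 s hs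
      have hY := (iter u).1 s hs
      rw [show 2*(m+3)-3-(u+u+1) = 2*(m-u)+2 by omega,
        show u+u+1 = 2*u+1 by ring]
      rw [show ((-1:ℝ))^(2*u+1) = -1 by simp [pow_succ, pow_mul]]
      unfold curvOp
      rw [pfT _ _ _ _ hX, pfT _ _ _ _ hY, hX, hY]
      have hpow : a^(m-u) * a^u = a^m := by rw [← pow_add]; congr 1; omega
      rw [← hpow]
      funext i
      simp only [Pi.add_apply, Pi.smul_apply, Pi.sub_apply, smul_eq_mul]
      ring
    · -- j = 2u+1, ℓ = 2u+2 even
      subst hu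
      have hu2 : u ≤ m := by omega
      have hX := (iter (m-u)).1 s hs
      have hY := (iter u).2 s hs
      rw [show 2*(m+3)-3-(2*u+1+1) = 2*(m-u)+1 by omega,
        show 2*u+1+1 = 2*u+2 by ring]
      rw [show ((-1:ℝ))^(2*u+1+1) = 1 by simp [pow_succ, pow_mul]]
      unfold curvOp
      rw [pfT _ _ _ _ hX, pfT _ _ _ _ hY, hX, hY]
      have hpow : a^u * a^(m-u) = a^m := by rw [← pow_add]; congr 1; omega
      rw [← hpow]
      funext i
      simp only [Pi.add_apply, Pi.smul_apply, Pi.sub_apply, smul_eq_mul]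
      ring
  -- term ℓ = 0
  have hterm0 :
      ((-1 : ℝ)^0) • curvOp 2 c ((cov 2 c γ)^[2*(m+3)-3-0] (deriv γ) s)
        ((cov 2 c γ)^[0] (deriv γ) s) (deriv γ s)
      = (c*ε₁*(a^(m+1)*(ε₂*κ))) • N s := by
    have hX := (iter (m+1)).1 s hs
    rw [show 2*(m+3)-3-0 = 2*(m+1)+1 by omega]
    rw [Function.iterate_zero_apply]
    unfold curvOp
    rw [pfT _ _ _ _ hX, hTT s hs, hX]
    funext i
    simp only [Pi.add_apply, Pi.smul_apply, Pi.sub_apply, smul_eq_mul, pow_zero]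
    ring
  -- main expression
  unfold tensionField
  rw [show 2*(m+3)-1 = 2*(m+2)+1 by omega, (iter (m+2)).1 s hs,
    show (m+3)-1 = (m+1)+1 by omega, Finset.sum_range_succ',
    Finset.sum_congr rfl hterm, Finset.sum_const, hterm0,
    Finset.card_range, ← Nat.cast_smul_eq_nsmul ℝ, smul_smul]
  funext i
  simp only [Pi.add_apply, Pi.smul_apply, smul_eq_mul]
  push_cast
  linear_combination (-((m:ℝ)+1)*c*κ^3*a^m*ε₂*ε₂*(N s i)) * he1

lemma quad_iff {c : ℝ} (hc : c < 0) (R : ℝ) (hR : 1 ≤ R) (κ τ : ℝ) (hκ : 0 < κ)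
    (u : ℝ) (hu : u = τ^2 - κ^2) :
    (u^2 + c*u - R*c*κ^2 = 0) ↔
      (κ^2 ≤ -c/(4*R) ∧
        (τ^2 = (2*κ^2 - c + Real.sqrt (c^2 + 4*c*R*κ^2))/2 ∨
         τ^2 = (2*κ^2 - c - Real.sqrt (c^2 + 4*c*R*κ^2))/2)) := by
  have hR0 : 0 < R := by linarith
  constructor
  · intro h
    have hD : c^2 + 4*c*R*κ^2 = (2*u+c)^2 := by linear_combination -4*h
    have hDnn : 0 ≤ c^2 + 4*c*R*κ^2 := by rw [hD]; positivity
    have hk : κ^2 ≤ -c/(4*R) := by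
      rw [le_div_iff₀ (by positivity : (0:ℝ) < 4*R)]
      nlinarith [hDnn, mul_pos (neg_pos.mpr hc) (mul_pos (by positivity : (0:ℝ) < 4*R) (mul_pos hκ hκ))]
    refine ⟨hk, ?_⟩
    have habs : Real.sqrt (c^2 + 4*c*R*κ^2) = |2*u+c| := by
      rw [hD, Real.sqrt_sq_eq_abs]
    rcases le_or_gt 0 (2*u+c) with h'|h'
    · left; rw [habs, abs_of_nonneg h', hu]; ring
    · right; rw [habs, abs_of_neg h', hu]; ring
  · rintro ⟨hk, hτ2⟩
    have h4 : κ^2*(4*R) ≤ -c := (le_div_iff₀ (by positivity)).mp hk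
    have hDnn : 0 ≤ c^2 + 4*c*R*κ^2 := by nlinarith [mul_nonneg (neg_nonneg.mpr hc.le) (by linarith : 0 ≤ -c - 4*R*κ^2)]
    have hsq := Real.sq_sqrt hDnn
    rcases hτ2 with h|h <;> rw [hu, h] <;> linear_combination hsq/4

lemma quad_iff2 {c : ℝ} (hc : c < 0) (R : ℝ) (hR : 1 ≤ R) (κ τ : ℝ) (hκ : 0 < κ) (hτ : 0 < τ)
    (u : ℝ) (hu : u = κ^2 + τ^2) :
    (u^2 + c*u + R*c*κ^2 = 0) ↔
      (κ^2 ≤ -c*(R+1) ∧ τ^2 = (-(2*κ^2) - c + Real.sqrt (c^2 - 4*c*R*κ^2))/2) := by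
  have hR0 : 0 < R := by linarith
  have hDnn : 0 ≤ c^2 - 4*c*R*κ^2 := by
    nlinarith [sq_nonneg c, mul_nonneg (mul_nonneg (neg_nonneg.mpr hc.le) hR0.le) (sq_nonneg κ)]
  have hsq := Real.sq_sqrt hDnn
  have hsle : -c ≤ Real.sqrt (c^2 - 4*c*R*κ^2) := by
    rw [show -c = |c| from (abs_of_neg hc).symm, ← Real.sqrt_sq_eq_abs]
    apply Real.sqrt_le_sqrt
    nlinarith [mul_nonneg (mul_nonneg (neg_nonneg.mpr hc.le) hR0.le) (sq_nonneg κ)]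
  constructor
  · intro h
    have hD : c^2 - 4*c*R*κ^2 = (2*u+c)^2 := by linear_combination -4*h
    have habs : Real.sqrt (c^2 - 4*c*R*κ^2) = |2*u+c| := by
      rw [hD, Real.sqrt_sq_eq_abs]
    have hupos : 0 < u := by rw [hu]; positivity
    rcases le_or_gt 0 (2*u+c) with h'|h'
    · have hs : Real.sqrt (c^2 - 4*c*R*κ^2) = 2*u+c := by rw [habs, abs_of_nonneg h']
      constructor
      · nlinarith [h, mul_pos hτ hτ, mul_pos hκ hκ, mul_pos (mul_pos hκ hκ) (mul_pos hτ hτ),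
          mul_pos (neg_pos.mpr hc) hR0, mul_pos (mul_pos (neg_pos.mpr hc) hR0) (mul_pos hκ hκ),
          mul_pos (mul_pos hκ hκ) hR0]
      · rw [hs, hu]; ring
    · exfalso
      rw [habs, abs_of_neg h'] at hsle
      linarith
  · rintro ⟨hk, h⟩
    rw [hu, h]
    linear_combination hsq/4

/-- `r`-harmonicity (`r ≥ 3`) of a `3`-Frenet helix in the anti-de Sitter
space `H³₁(c) ⊂ ℝ⁴₂` (`c < 0`), according to the causal character of the normal `N`. -/
theorem stmt_10 (r : ℕ) (hr : 3 ≤ r) (c : ℝ) (hc : c < 0)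
    (I : Set ℝ) (hIopen : IsOpen I) (hIne : I.Nonempty)
    (γ N B : ℝ → Fin 4 → ℝ)
    (hγ : ContDiffOn ℝ (⊤ : ℕ∞) γ I) (hN : ContDiffOn ℝ (⊤ : ℕ∞) N I) (hB : ContDiffOn ℝ (⊤ : ℕ∞) B I)
    (ε₁ ε₂ ε₃ : ℝ)
    (hone : (ε₁ = -1 ∧ ε₂ = 1 ∧ ε₃ = 1) ∨ (ε₁ = 1 ∧ ε₂ = -1 ∧ ε₃ = 1) ∨
            (ε₁ = 1 ∧ ε₂ = 1 ∧ ε₃ = -1))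
    (κ τ : ℝ) (hκ : 0 < κ) (hτ : 0 < τ)
    (hquad : ∀ s ∈ I, pform 2 (γ s) (γ s) = 1 / c)
    (hTT : ∀ s ∈ I, pform 2 (deriv γ s) (deriv γ s) = ε₁)
    (hNN : ∀ s ∈ I, pform 2 (N s) (N s) = ε₂)
    (hBB : ∀ s ∈ I, pform 2 (B s) (B s) = ε₃)
    (hTN : ∀ s ∈ I, pform 2 (deriv γ s) (N s) = 0)
    (hTB : ∀ s ∈ I, pform 2 (deriv γ s) (B s) = 0)
    (hNB : ∀ s ∈ I, pform 2 (N s) (B s) = 0)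
    (hNtan : ∀ s ∈ I, pform 2 (N s) (γ s) = 0)
    (hBtan : ∀ s ∈ I, pform 2 (B s) (γ s) = 0)
    (hFr1 : ∀ s ∈ I, cov 2 c γ (deriv γ) s = (ε₂ * κ) • N s)
    (hFr2 : ∀ s ∈ I, cov 2 c γ N s = (-(ε₁ * κ)) • deriv γ s + (ε₃ * τ) • B s)
    (hFr3 : ∀ s ∈ I, cov 2 c γ B s = (-(ε₂ * τ)) • N s) :
    (ε₂ = 1 →
      ((∀ s ∈ I, tensionField 2 c r γ s = 0) ↔
        ((3 < r ∧ κ ^ 2 = τ ^ 2) ∨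
         (κ ^ 2 ≤ -c / (4 * ((r : ℝ) - 2)) ∧
           (τ ^ 2 = (2 * κ ^ 2 - c + Real.sqrt (c ^ 2 + 4 * c * ((r : ℝ) - 2) * κ ^ 2)) / 2 ∨
            τ ^ 2 = (2 * κ ^ 2 - c - Real.sqrt (c ^ 2 + 4 * c * ((r : ℝ) - 2) * κ ^ 2)) / 2))))) ∧
    (ε₂ = -1 →
      ((∀ s ∈ I, tensionField 2 c r γ s = 0) ↔
        (κ ^ 2 ≤ -c * ((r : ℝ) - 1) ∧
          τ ^ 2 = (-(2 * κ ^ 2) - c + Real.sqrt (c ^ 2 - 4 * c * ((r : ℝ) - 2) * κ ^ 2)) / 2))) := by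
  have he1 : ε₁ * ε₁ = 1 := by
    rcases hone with ⟨h,_,_⟩|⟨h,_,_⟩|⟨h,_,_⟩ <;> rw [h] <;> norm_num
  have hε₂ne : ε₂ ≠ 0 := by
    rcases hone with ⟨_,h,_⟩|⟨_,h,_⟩|⟨_,h,_⟩ <;> rw [h] <;> norm_num
  have hdT : ∀ s ∈ I, DifferentiableAt ℝ (deriv γ) s := by
    intro s hs
    have h1 : ContDiffOn ℝ (⊤ : ℕ∞) (deriv γ) I := hγ.deriv_of_isOpen hIopen (by simp)
    exact (h1.differentiableOn (by simp)).differentiableAt (hIopen.mem_nhds hs)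
  have hdN : ∀ s ∈ I, DifferentiableAt ℝ N s := fun s hs =>
    (hN.differentiableOn (by simp)).differentiableAt (hIopen.mem_nhds hs)
  have hdB : ∀ s ∈ I, DifferentiableAt ℝ B s := fun s hs =>
    (hB.differentiableOn (by simp)).differentiableAt (hIopen.mem_nhds hs)
  obtain ⟨s₀, hs₀⟩ := hIne
  have hNne : N s₀ ≠ 0 := by
    intro h
    have h2 := hNN s₀ hs₀
    rw [h] at h2
    simp [pform] at h2
    exact hε₂ne h2.symm
  set A : ℝ := -(ε₁*ε₂*κ^2 + ε₂*ε₃*τ^2) with hA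
  have htens := tens_formula hIopen hdT hdN hdB hTT hTN hTB hFr1 hFr2 hFr3 he1 A hA r hr
  have hκne : ε₂ * κ ≠ 0 := mul_ne_zero hε₂ne hκ.ne'
  have hiff : (∀ s ∈ I, tensionField 2 c r γ s = 0) ↔
      A^(r-3) * (A^2 + c*ε₁*A - ((r:ℝ)-2)*c*ε₂*κ^2) = 0 := by
    constructor
    · intro h
      have h0 := h s₀ hs₀
      rw [htens s₀ hs₀] at h0
      rcases smul_eq_zero.mp h0 with h'|h'
      · have h'' : (ε₂*κ) * (A^(r-3) * (A^2 + c*ε₁*A - ((r:ℝ)-2)*c*ε₂*κ^2)) = 0 := by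
          linear_combination h'
        exact (mul_eq_zero.mp h'').resolve_left hκne
      · exact absurd h' hNne
    · intro h s hs
      rw [htens s hs]
      have h'' : ε₂ * κ * A^(r-3) * (A^2 + c*ε₁*A - ((r:ℝ)-2)*c*ε₂*κ^2) = 0 := by
        linear_combination (ε₂*κ) * h
      rw [h'', zero_smul]
  have hr3 : (3:ℝ) ≤ (r:ℝ) := by exact_mod_cast hr
  have hrR : (1:ℝ) ≤ (r:ℝ) - 2 := by linarith
  constructor
  · intro hε2
    rcases hone with ⟨h1,h2,h3⟩|⟨h1,h2,h3⟩|⟨h1,h2,h3⟩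
    · subst h1; subst h2; subst h3
      have hAval : A = κ^2 - τ^2 := by rw [hA]; ring
      have hq := quad_iff hc ((r:ℝ)-2) hrR κ τ hκ (τ^2-κ^2) rfl
      rw [hiff, mul_eq_zero, pow_eq_zero_iff']
      constructor
      · rintro (⟨hA0, hrn⟩ | hQ)
        · left
          refine ⟨by omega, ?_⟩
          rw [hAval] at hA0; linarith
        · right
          apply hq.mp
          rw [hAval] at hQ
          linear_combination hQ
      · rintro (⟨hrn, hκτ⟩ | hrhs)
        · left
          exact ⟨by rw [hAval]; linarith, by omega⟩
        · right
          have hQ := hq.mpr hrhs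
          rw [hAval]
          linear_combination hQ
    · rw [h2] at hε2; norm_num at hε2
    · subst h1; subst h2; subst h3
      have hAval : A = τ^2 - κ^2 := by rw [hA]; ring
      have hq := quad_iff hc ((r:ℝ)-2) hrR κ τ hκ (τ^2-κ^2) rfl
      rw [hiff, mul_eq_zero, pow_eq_zero_iff']
      constructor
      · rintro (⟨hA0, hrn⟩ | hQ)
        · left
          refine ⟨by omega, ?_⟩
          rw [hAval] at hA0; linarith
        · right
          apply hq.mp
          rw [hAval] at hQ
          linear_combination hQ
      · rintro (⟨hrn, hκτ⟩ | hrhs)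
        · left
          exact ⟨by rw [hAval]; linarith, by omega⟩
        · right
          have hQ := hq.mpr hrhs
          rw [hAval]
          linear_combination hQ
  · intro hε2
    rcases hone with ⟨h1,h2,h3⟩|⟨h1,h2,h3⟩|⟨h1,h2,h3⟩
    · rw [h2] at hε2; norm_num at hε2
    · subst h1; subst h2; subst h3
      have hAval : A = κ^2 + τ^2 := by rw [hA]; ring
      have hApos : 0 < A := by rw [hAval]; positivity
      have hq := quad_iff2 hc ((r:ℝ)-2) hrR κ τ hκ hτ (κ^2+τ^2) rfl
      rw [show ((r:ℝ)-2)+1 = (r:ℝ)-1 by ring] at hq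
      rw [hiff]
      constructor
      · intro h
        rcases mul_eq_zero.mp h with h'|h'
        · exact absurd h' (pow_ne_zero _ hApos.ne')
        · apply hq.mp
          rw [hAval] at h'
          linear_combination h'
      · intro h
        have hQ := hq.mpr h
        rw [hAval]
        linear_combination ((κ^2+τ^2)^(r-3)) * hQ
    · rw [h2] at hε2; norm_num at hε2
end
end
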